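/- In the reduction graph construction (see context), suppose G contains a shattered set S with |S| ≥ k. Then S contains exactly one vertex u_i from each U_i (i ∈ {1,…,k}), and these vertices u_1, …, u_k are pairwise related by R. -/

import Mathlib

/-!
Every trace `N(w) ∩ S` is empty or a singleton (`w ∈ X ∪ I₁`), a consistent pair from two
different classes (`w ∈ I₂`), or the part of `S` lying in a union of at least three whole classes
(`w ∈ I_{≥3}`). As `G` is bipartite with sides `X` and `Y`, a shattered set lies in one side.
Inside `Y`, a vertex of degree at most two cannot be in a shattered set of size three, so the set
lies in `I_{≥3}`; there the trace of a vertex of `X` only depends on its class, leaving at most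
`k + 1 < 2 ^ k` traces. Hence `S ⊆ X`. Two vertices of one class are never separated by a trace
with three elements, nor (when `|S| = k = 3`) is their pair a trace, so `S` meets every class at
most once, and exactly once since `|S| ≥ k`. Finally `{u_i, u_j}` is not the trace of a union of
three classes, so it is the neighbourhood of a vertex of `I₂`, which gives `R u_i u_j`.
-/

theorem Set.exists_mem_notMem_of_card_lt_encard {α : Type*} {s : Set α} {t : Finset α}
    (h : (t.card : ℕ∞) < s.encard) : ∃ x ∈ s, x ∉ t := by
  by_contra! hst
  rw [← Set.encard_coe_eq_coe_finsetCard] at h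
  exact (Set.encard_le_encard hst).not_gt h

theorem Set.nonempty_inter_of_subsingleton_inter {α ι : Type*} [Fintype ι] {U : ι → Set α}
    {S : Set α} (hSU : S ⊆ ⋃ i, U i) (hU : ∀ i, (S ∩ U i).Subsingleton)
    (hS : (Fintype.card ι : ℕ∞) ≤ S.encard) (i : ι) : (S ∩ U i).Nonempty := by
  have : Nonempty ι := ⟨i⟩
  choose! c hc using fun s (hs : s ∈ S) => Set.mem_iUnion.1 (hSU hs)
  have hinj : Set.InjOn c S := fun s hs t ht h => hU (c s) ⟨hs, hc s hs⟩ ⟨ht, h ▸ hc t ht⟩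
  have hsurj : c '' S = Set.univ := (Set.toFinite _).eq_of_subset_of_encard_le
    (Set.subset_univ _) (by rwa [hinj.encard_image, Set.encard_univ, ENat.card_eq_coe_fintype_card])
  obtain ⟨s, hs, rfl⟩ : i ∈ c '' S := hsurj ▸ Set.mem_univ i
  exact ⟨s, hs, hc s hs⟩

theorem Nat.add_one_lt_two_pow {n : ℕ} (hn : 2 ≤ n) : n + 1 < 2 ^ n := by
  obtain ⟨m, rfl⟩ : ∃ m, n = m + 1 := ⟨n - 1, by omega⟩
  have := Nat.lt_two_pow_self (n := m)
  rw [pow_succ]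
  omega

namespace SimpleGraph

variable {V : Type*}

def Shatters (G : SimpleGraph V) (S : Set V) : Prop :=
  ∀ T ⊆ S, ∃ w, G.neighborSet w ∩ S = T

variable {G : SimpleGraph V}

namespace Shatters

variable {S : Set V}

theorem subset_or_disjoint (hS : G.Shatters S) {X : Set V}
    (hX : ∀ w, G.neighborSet w ⊆ X ∨ Disjoint (G.neighborSet w) X) : S ⊆ X ∨ Disjoint S X := by
  refine or_iff_not_imp_right.2 fun hSX a haS => ?_
  obtain ⟨b, hbS, hbX⟩ := Set.not_disjoint_iff.1 hSX
  by_contra haX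
  obtain ⟨w, hw⟩ := hS {a, b} (Set.pair_subset haS hbS)
  rcases hX w with h | h
  · exact haX (h (hw.ge (by simp)).1)
  · exact Set.disjoint_left.1 h (hw.ge (by simp)).1 hbX

theorem not_neighborSet_subset_pair (hS : G.Shatters S) (hS3 : 3 ≤ S.encard) {s : V}
    (hs : s ∈ S) (p q : V) : ¬ G.neighborSet s ⊆ {p, q} := by
  classical
  intro hpq
  obtain ⟨a, haS, has⟩ := Set.exists_mem_notMem_of_card_lt_encard (t := {s})
    (lt_of_lt_of_le (by simp) hS3)
  obtain ⟨b, hbS, hb⟩ := Set.exists_mem_notMem_of_card_lt_encard (t := {s, a})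
    (lt_of_lt_of_le (by exact_mod_cast Finset.card_le_two.trans_lt (show 2 < 3 by norm_num)) hS3)
  simp only [Finset.mem_insert, Finset.mem_singleton, not_or] at has hb
  obtain ⟨w₁, h₁⟩ := hS {s} (Set.singleton_subset_iff.2 hs)
  obtain ⟨w₂, h₂⟩ := hS {s, a} (Set.pair_subset hs haS)
  obtain ⟨w₃, h₃⟩ := hS {s, b} (Set.pair_subset hs hbS)
  have hw : ∀ {w T}, G.neighborSet w ∩ S = T → s ∈ T → w = p ∨ w = q :=
    fun h hsT => hpq (G.adj_symm (h.ge hsT).1)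
  have hne : ∀ {w w' T T'}, G.neighborSet w ∩ S = T → G.neighborSet w' ∩ S = T' → T ≠ T' →
      w ≠ w' := by
    rintro w _ T T' h h' hT rfl
    exact hT (h.symm.trans h')
  have h₁₂ : w₁ ≠ w₂ := hne h₁ h₂ fun h => has (by simpa using h.ge (Set.mem_insert_of_mem s rfl))
  have h₁₃ : w₁ ≠ w₃ := hne h₁ h₃ fun h => hb.1 (by simpa using h.ge (Set.mem_insert_of_mem s rfl))
  have h₂₃ : w₂ ≠ w₃ := hne h₂ h₃ fun h => hb.2 (by simpa [hb.1] using h.ge (Set.mem_insert_of_mem s rfl))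
  rcases hw h₁ rfl with rfl | rfl <;> rcases hw h₂ (by simp) with rfl | rfl <;>
    rcases hw h₃ (by simp) with rfl | rfl <;> contradiction

theorem two_pow_le_card (hS : G.Shatters S) {n : ℕ} (hn : n ≤ S.encard) {β : Type*} [Fintype β]
    (c : V → β) (hc : ∀ w w', c w = c w' → G.neighborSet w ∩ S = G.neighborSet w' ∩ S) :
    2 ^ n ≤ Fintype.card β := by
  obtain ⟨t, htS, htn⟩ := Set.exists_subset_encard_eq hn
  obtain ⟨F, rfl⟩ := (Set.finite_of_encard_eq_coe htn).exists_finset_coe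
  rw [Set.encard_coe_eq_coe_finsetCard, Nat.cast_inj] at htn
  obtain ⟨w, -⟩ := hS ∅ (Set.empty_subset S)
  have : Nonempty V := ⟨w⟩
  choose! r hr using hS
  rw [← htn, ← Finset.card_powerset, ← Finset.card_univ]
  refine Finset.card_le_card_of_injOn (fun T : Finset V => c (r T)) (fun _ _ => by simp)
    fun T hT T' hT' h => ?_
  have hT : (T : Set V) ⊆ S := (Finset.coe_subset.2 (Finset.mem_powerset.1 hT)).trans htS
  have hT' : (T' : Set V) ⊆ S := (Finset.coe_subset.2 (Finset.mem_powerset.1 hT')).trans htS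
  exact_mod_cast (hr T hT).symm.trans ((hc _ _ h).trans (hr T' hT'))

end Shatters

structure IsReductionGraph {k : ℕ} (G : SimpleGraph V) (U : Fin k → Set V) (X I₁ I₂ I₃ : Set V)
    (R : V → V → Prop) : Prop where
  disjoint : ∀ i j, i ≠ j → Disjoint (U i) (U j)
  eq_iUnion : X = ⋃ i, U i
  symm : ∀ u v, R u v → R v u
  mem_cases : ∀ v, v ∈ X ∨ v ∈ I₁ ∨ v ∈ I₂ ∨ v ∈ I₃
  not_adj : ∀ u ∈ X, ∀ v ∈ X, ¬ G.Adj u v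
  neighborSet_of_mem_I₁ : ∀ w ∈ I₁, ∃ u ∈ X, G.neighborSet w = {u}
  neighborSet_of_mem_I₂ : ∀ w ∈ I₂, ∃ (i j : Fin k), ∃ u ∈ U i, ∃ v ∈ U j,
    i ≠ j ∧ R u v ∧ G.neighborSet w = {u, v}
  neighborSet_of_mem_I₃ : ∀ w ∈ I₃, ∃ A : Finset (Fin k), 3 ≤ A.card ∧
    G.neighborSet w = ⋃ i ∈ A, U i

namespace IsReductionGraph

variable {k : ℕ} {U : Fin k → Set V} {X I₁ I₂ I₃ : Set V} {R : V → V → Prop} {S : Set V}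

theorem subset (hG : G.IsReductionGraph U X I₁ I₂ I₃ R) (i : Fin k) : U i ⊆ X :=
  hG.eq_iUnion ▸ Set.subset_iUnion U i

theorem eq_of_mem_of_mem (hG : G.IsReductionGraph U X I₁ I₂ I₃ R) {v : V} {i j : Fin k}
    (hi : v ∈ U i) (hj : v ∈ U j) : i = j :=
  by_contra fun h => Set.disjoint_left.1 (hG.disjoint i j h) hi hj

theorem mem_biUnion_iff (hG : G.IsReductionGraph U X I₁ I₂ I₃ R) {v : V} {l : Fin k}
    (hv : v ∈ U l) {A : Finset (Fin k)} : v ∈ ⋃ i ∈ A, U i ↔ l ∈ A := by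
  simp only [Set.mem_iUnion, exists_prop]
  exact ⟨fun ⟨i, hiA, hvi⟩ => hG.eq_of_mem_of_mem hvi hv ▸ hiA, fun hlA => ⟨l, hlA, hv⟩⟩

theorem neighborSet_subset_of_notMem (hG : G.IsReductionGraph U X I₁ I₂ I₃ R) {w : V}
    (hw : w ∉ X) : G.neighborSet w ⊆ X := by
  rcases hG.mem_cases w with h | h | h | h
  · exact absurd h hw
  · obtain ⟨u, hu, hN⟩ := hG.neighborSet_of_mem_I₁ w h
    exact hN ▸ Set.singleton_subset_iff.2 hu
  · obtain ⟨i, j, u, hu, v, hv, -, -, hN⟩ := hG.neighborSet_of_mem_I₂ w h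
    exact hN ▸ Set.pair_subset (hG.subset i hu) (hG.subset j hv)
  · obtain ⟨A, -, hN⟩ := hG.neighborSet_of_mem_I₃ w h
    exact hN ▸ Set.iUnion₂_subset fun i _ => hG.subset i

theorem disjoint_neighborSet_of_mem (hG : G.IsReductionGraph U X I₁ I₂ I₃ R) {w : V}
    (hw : w ∈ X) : Disjoint (G.neighborSet w) X :=
  Set.disjoint_left.2 fun v hv hvX => hG.not_adj w hw v hvX hv

theorem neighborSet_cases (hG : G.IsReductionGraph U X I₁ I₂ I₃ R) (w : V) :
    (G.neighborSet w ∩ X).Subsingleton ∨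
      (∃ (i j : Fin k), ∃ p ∈ U i, ∃ q ∈ U j, i ≠ j ∧ R p q ∧ G.neighborSet w = {p, q}) ∨
      ∃ A : Finset (Fin k), 3 ≤ A.card ∧ G.neighborSet w = ⋃ i ∈ A, U i := by
  rcases hG.mem_cases w with h | h | h | h
  · left
    rw [(hG.disjoint_neighborSet_of_mem h).inter_eq]
    exact Set.subsingleton_empty
  · obtain ⟨u, -, hN⟩ := hG.neighborSet_of_mem_I₁ w h
    exact Or.inl (hN ▸ Set.subsingleton_singleton.anti Set.inter_subset_left)
  · exact Or.inr (Or.inl (hG.neighborSet_of_mem_I₂ w h))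
  · exact Or.inr (Or.inr ((hG.neighborSet_of_mem_I₃ w h).imp fun _ => id))

theorem exists_neighborSet_eq_of_notMem (hG : G.IsReductionGraph U X I₁ I₂ I₃ R)
    (hS : G.Shatters S) (hS3 : 3 ≤ S.encard) {s : V} (hs : s ∈ S) (hsX : s ∉ X) :
    ∃ A : Finset (Fin k), G.neighborSet s = ⋃ i ∈ A, U i := by
  rcases hG.mem_cases s with h | h | h | h
  · exact absurd h hsX
  · obtain ⟨u, -, hN⟩ := hG.neighborSet_of_mem_I₁ s h
    exact absurd (hN.trans (Set.pair_eq_singleton u).symm).le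
      (hS.not_neighborSet_subset_pair hS3 hs u u)
  · obtain ⟨-, -, p, -, q, -, -, -, hN⟩ := hG.neighborSet_of_mem_I₂ s h
    exact absurd hN.le (hS.not_neighborSet_subset_pair hS3 hs p q)
  · obtain ⟨A, -, hN⟩ := hG.neighborSet_of_mem_I₃ s h
    exact ⟨A, hN⟩

theorem subset_of_shatters (hG : G.IsReductionGraph U X I₁ I₂ I₃ R) (hk : 3 ≤ k)
    (hS : G.Shatters S) (hkS : k ≤ S.encard) : S ⊆ X := by
  refine (hS.subset_or_disjoint fun w => ?_).resolve_right fun hSX => ?_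
  · by_cases hw : w ∈ X
    · exact Or.inr (hG.disjoint_neighborSet_of_mem hw)
    · exact Or.inl (hG.neighborSet_subset_of_notMem hw)
  have hS3 : 3 ≤ S.encard := le_trans (by exact_mod_cast hk) hkS
  choose A hA using fun s (hs : s ∈ S) =>
    hG.exists_neighborSet_eq_of_notMem hS hS3 hs (Set.disjoint_left.1 hSX hs)
  have : Nonempty (Fin k) := ⟨⟨0, by omega⟩⟩
  choose! cls hcls using fun w (hw : w ∈ X) => Set.mem_iUnion.1 (hG.eq_iUnion ▸ hw)
  classical
  -- the trace of a vertex only depends on its class, or on its lying outside `X`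
  let c : V → Option (Fin k) := fun w => if w ∈ X then some (cls w) else none
  have hc : ∀ w w', c w = c w' → G.neighborSet w ∩ S = G.neighborSet w' ∩ S := by
    intro w w' h
    by_cases hw : w ∈ X <;> by_cases hw' : w' ∈ X <;> simp only [c, hw, hw', if_true,
      if_false, reduceCtorEq, Option.some_inj] at h
    · ext s
      refine and_congr_left fun hs => ?_
      rw [mem_neighborSet, mem_neighborSet, G.adj_comm, G.adj_comm w', ← mem_neighborSet,
        ← mem_neighborSet, hA s hs, hG.mem_biUnion_iff (hcls w hw),
        hG.mem_biUnion_iff (hcls w' hw'), h]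
    · have hN : ∀ {v}, v ∉ X → G.neighborSet v ∩ S = ∅ := fun hv =>
        Set.disjoint_iff_inter_eq_empty.1 (hSX.symm.mono_left (hG.neighborSet_subset_of_notMem hv))
      rw [hN hw, hN hw']
  have h2k := hS.two_pow_le_card hkS c hc
  rw [Fintype.card_option, Fintype.card_fin] at h2k
  exact (Nat.add_one_lt_two_pow (by omega)).not_ge h2k

theorem exists_eq_iUnion_of_three (hG : G.IsReductionGraph U X I₁ I₂ I₃ R) (hS : G.Shatters S)
    (hSX : S ⊆ X) {x y z : V} (hx : x ∈ S) (hy : y ∈ S) (hz : z ∈ S) (hxy : x ≠ y)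
    (hxz : x ≠ z) (hyz : y ≠ z) : ∃ A : Finset (Fin k), S ∩ ⋃ i ∈ A, U i = {x, y, z} := by
  obtain ⟨w, hw⟩ := hS {x, y, z} (Set.insert_subset hx (Set.pair_subset hy hz))
  have hxw := (hw.ge (by simp : x ∈ ({x, y, z} : Set V))).1
  have hyw := (hw.ge (by simp : y ∈ ({x, y, z} : Set V))).1
  have hzw := (hw.ge (by simp : z ∈ ({x, y, z} : Set V))).1
  rcases hG.neighborSet_cases w with h | ⟨-, -, p, -, q, -, -, -, hN⟩ | ⟨A, -, hN⟩
  · exact absurd (h ⟨hxw, hSX hx⟩ ⟨hyw, hSX hy⟩) hxy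
  · rw [hN] at hxw hyw hzw
    rcases hxw with rfl | rfl <;> rcases hyw with rfl | rfl <;> rcases hzw with rfl | rfl <;>
      contradiction
  · exact ⟨A, by rw [← hN, Set.inter_comm, hw]⟩

theorem pair_cases (hG : G.IsReductionGraph U X I₁ I₂ I₃ R) (hS : G.Shatters S) (hSX : S ⊆ X)
    {a b : V} (ha : a ∈ S) (hb : b ∈ S) (hab : a ≠ b) :
    (R a b ∧ ∀ i, a ∈ U i → b ∉ U i) ∨
      ∃ A : Finset (Fin k), 3 ≤ A.card ∧ S ∩ ⋃ i ∈ A, U i = {a, b} := by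
  obtain ⟨w, hw⟩ := hS {a, b} (Set.pair_subset ha hb)
  have haw := (hw.ge (by simp : a ∈ ({a, b} : Set V))).1
  have hbw := (hw.ge (by simp : b ∈ ({a, b} : Set V))).1
  rcases hG.neighborSet_cases w with h | ⟨i, j, p, hp, q, hq, hij, hR, hN⟩ | ⟨A, hA3, hN⟩
  · exact absurd (h ⟨haw, hSX ha⟩ ⟨hbw, hSX hb⟩) hab
  · left
    have hsep : ∀ l, p ∈ U l → q ∉ U l := fun l hpl hql =>
      hij ((hG.eq_of_mem_of_mem hp hpl).trans (hG.eq_of_mem_of_mem hq hql).symm)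
    rw [hN] at haw hbw
    rcases haw with rfl | rfl <;> rcases hbw with rfl | rfl
    · exact absurd rfl hab
    · exact ⟨hR, hsep⟩
    · exact ⟨hG.symm _ _ hR, fun l hql hpl => hsep l hpl hql⟩
    · exact absurd rfl hab
  · exact Or.inr ⟨A, hA3, by rw [← hN, Set.inter_comm, hw]⟩

theorem subsingleton_inter (hG : G.IsReductionGraph U X I₁ I₂ I₃ R) (hk : 3 ≤ k)
    (hS : G.Shatters S) (hkS : k ≤ S.encard) (hSX : S ⊆ X) (i : Fin k) :
    (S ∩ U i).Subsingleton := by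
  classical
  rintro a ⟨haS, ha⟩ b ⟨hbS, hb⟩
  by_contra hab
  have hsat : ∀ A : Finset (Fin k), a ∈ ⋃ i ∈ A, U i → b ∈ S ∩ ⋃ i ∈ A, U i := fun A h =>
    ⟨hbS, (hG.mem_biUnion_iff hb).2 ((hG.mem_biUnion_iff ha).1 h)⟩
  obtain ⟨x, hxS, hx⟩ := Set.exists_mem_notMem_of_card_lt_encard (t := {a, b})
    (lt_of_lt_of_le (by exact_mod_cast Finset.card_le_two.trans_lt (show 2 < k by omega)) hkS)
  simp only [Finset.mem_insert, Finset.mem_singleton, not_or] at hx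
  by_cases hy : ∃ y ∈ S, y ∉ ({a, b, x} : Finset V)
  · -- `a` and two further vertices form a trace, which would contain `b` as well
    obtain ⟨y, hyS, hy⟩ := hy
    simp only [Finset.mem_insert, Finset.mem_singleton, not_or] at hy
    obtain ⟨A, hA⟩ := hG.exists_eq_iUnion_of_three hS hSX haS hxS hyS (Ne.symm hx.1)
      (Ne.symm hy.1) (Ne.symm hy.2.2)
    have := hA ▸ hsat A (hA.ge (by simp)).2
    simp only [Set.mem_insert_iff, Set.mem_singleton_iff] at this
    exact this.elim (hab ∘ Eq.symm) fun h => h.elim (hx.2 ∘ Eq.symm) (hy.2.1 ∘ Eq.symm)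
  · -- otherwise `S = {a, b, x}` and `k = 3`, so a union of three classes contains `x`
    push Not at hy
    have hk3 : (k : ℕ∞) ≤ 3 := hkS.trans <| (Set.encard_le_encard hy).trans <| by
      rw [Set.encard_coe_eq_coe_finsetCard]
      exact_mod_cast Finset.card_le_three
    rcases hG.pair_cases hS hSX haS hbS hab with ⟨-, hsep⟩ | ⟨A, hA3, hA⟩
    · exact hsep i ha hb
    obtain ⟨m, hm⟩ := Set.mem_iUnion.1 (hG.eq_iUnion ▸ hSX hxS)
    have hAuniv : A = Finset.univ :=
      Finset.eq_univ_of_card A (le_antisymm (Finset.card_le_univ A) (by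
        simpa using (show k ≤ 3 by exact_mod_cast hk3).trans hA3))
    have : x ∈ S ∩ ⋃ i ∈ A, U i := ⟨hxS, (hG.mem_biUnion_iff hm).2 (hAuniv ▸ Finset.mem_univ m)⟩
    rw [hA] at this
    simp only [Set.mem_insert_iff, Set.mem_singleton_iff] at this
    exact this.elim hx.1 hx.2

theorem rel_of_shatters (hG : G.IsReductionGraph U X I₁ I₂ I₃ R) (hS : G.Shatters S)
    (hSX : S ⊆ X) {u : Fin k → V} (hu : ∀ i, u i ∈ S ∩ U i) {i j : Fin k} (hij : i ≠ j) :
    R (u i) (u j) := by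
  classical
  have hinj : ∀ {l l'}, u l = u l' → l = l' := fun h =>
    hG.eq_of_mem_of_mem (hu _).2 (h ▸ (hu _).2)
  rcases hG.pair_cases hS hSX (hu i).1 (hu j).1 (hij ∘ hinj) with ⟨hR, -⟩ | ⟨A, hA3, hA⟩
  · exact hR
  -- a third class `l ∈ A` puts `u l` into the trace `{u i, u j}`
  obtain ⟨l, hlA, hl⟩ := Finset.exists_mem_notMem_of_card_lt_card (s := {i, j})
    (Finset.card_le_two.trans_lt (lt_of_lt_of_le (by norm_num) hA3))
  have : u l ∈ S ∩ ⋃ i ∈ A, U i := ⟨(hu l).1, (hG.mem_biUnion_iff (hu l).2).2 hlA⟩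
  rw [hA] at this
  simp only [Set.mem_insert_iff, Set.mem_singleton_iff] at this
  simp only [Finset.mem_insert, Finset.mem_singleton, not_or] at hl
  exact (this.elim (hl.1 ∘ hinj) (hl.2 ∘ hinj)).elim

end IsReductionGraph

end SimpleGraph

theorem stmt_15_general {V : Type*} (G : SimpleGraph V) (k : ℕ) (hk : 3 ≤ k)
    (U : Fin k → Set V) (X I₁ I₂ I₃ : Set V) (R : V → V → Prop)
    (hUdisj : ∀ i j, i ≠ j → Disjoint (U i) (U j))
    (hX : X = ⋃ i, U i)
    (hRsymm : ∀ u v, R u v → R v u)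
    (hpart : ∀ v : V, v ∈ X ∨ v ∈ I₁ ∨ v ∈ I₂ ∨ v ∈ I₃)
    (hXind : ∀ u ∈ X, ∀ v ∈ X, ¬ G.Adj u v)
    (hI1 : ∀ w ∈ I₁, ∃ u ∈ X, G.neighborSet w = {u})
    (hI2 : ∀ w ∈ I₂, ∃ (i j : Fin k), ∃ u ∈ U i, ∃ v ∈ U j,
      i ≠ j ∧ R u v ∧ G.neighborSet w = {u, v})
    (hI3 : ∀ w ∈ I₃, ∃ A : Finset (Fin k), 3 ≤ A.card ∧
      G.neighborSet w = ⋃ i ∈ A, U i)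
    (S : Set V) (hScard : (k : ℕ∞) ≤ S.encard)
    (hSsh : ∀ T ⊆ S, ∃ w : V, G.neighborSet w ∩ S = T) :
    ∃ u : Fin k → V, S = Set.range u ∧ (∀ i, u i ∈ U i) ∧
      ∀ i j, i ≠ j → R (u i) (u j) := by
  have hG : G.IsReductionGraph U X I₁ I₂ I₃ R := ⟨hUdisj, hX, hRsymm, hpart, hXind, hI1, hI2, hI3⟩
  have hSX : S ⊆ X := hG.subset_of_shatters hk hSsh hScard
  have hsub := hG.subsingleton_inter hk hSsh hScard hSX
  choose u hu using Set.nonempty_inter_of_subsingleton_inter (hX ▸ hSX) hsub (by simpa using hScard)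
  refine ⟨u, Set.Subset.antisymm (fun s hs => ?_) (Set.range_subset_iff.2 fun i => (hu i).1),
    fun i => (hu i).2, fun i j => hG.rel_of_shatters hSsh hSX hu⟩
  obtain ⟨i, hi⟩ := Set.mem_iUnion.1 (hX ▸ hSX hs)
  exact ⟨i, hsub i (hu i) ⟨hs, hi⟩⟩

/-- soundness of the reduction: in the reduction graph construction —
`G` a simple graph whose vertex set is partitioned into `X = U_1 ∪ ⋯ ∪ U_k` (the `U i`
finite, nonempty, pairwise disjoint), `I₁`, `I₂`, `I₃` (= I_{≥3}), with `X` independent,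
`I₁` consisting exactly of the vertices with neighborhood `{u}` for each `u ∈ X`, `I₂` of
the vertices with neighborhood `{u, v}` for each pair `u ∈ U i`, `v ∈ U j`, `i ≠ j`,
`R u v`, and `I₃` of the vertices with neighborhood `⋃_{i ∈ A} U i` for each
`A ⊆ {1,…,k}` with `|A| ≥ 3` (`R` symmetric and irreflexive) — if `S` is a shattered set
of `G` with `|S| ≥ k`, then `S` consists of exactly one vertex `u i` from each `U i`, and
these vertices are pairwise related by `R`. -/
theorem stmt_15 {V : Type*} (G : SimpleGraph V) (k : ℕ) (hk : 3 ≤ k)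
    (U : Fin k → Set V) (X I₁ I₂ I₃ : Set V) (R : V → V → Prop)
    (hUfin : ∀ i, (U i).Finite) (hUne : ∀ i, (U i).Nonempty)
    (hUdisj : ∀ i j, i ≠ j → Disjoint (U i) (U j))
    (hX : X = ⋃ i, U i)
    (hRsymm : ∀ u v, R u v → R v u) (hRirr : ∀ u, ¬ R u u)
    (hpart : ∀ v : V, v ∈ X ∨ v ∈ I₁ ∨ v ∈ I₂ ∨ v ∈ I₃)
    (hd1 : Disjoint X I₁) (hd2 : Disjoint X I₂) (hd3 : Disjoint X I₃)
    (hd4 : Disjoint I₁ I₂) (hd5 : Disjoint I₁ I₃) (hd6 : Disjoint I₂ I₃)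
    (hXind : ∀ u ∈ X, ∀ v ∈ X, ¬ G.Adj u v)
    (hI1 : ∀ w ∈ I₁, ∃ u ∈ X, G.neighborSet w = {u})
    (hI1' : ∀ u ∈ X, ∃ w ∈ I₁, G.neighborSet w = {u})
    (hI2 : ∀ w ∈ I₂, ∃ (i j : Fin k), ∃ u ∈ U i, ∃ v ∈ U j,
      i ≠ j ∧ R u v ∧ G.neighborSet w = {u, v})
    (hI2' : ∀ (i j : Fin k), ∀ u ∈ U i, ∀ v ∈ U j, i ≠ j → R u v →
      ∃ w ∈ I₂, G.neighborSet w = {u, v})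
    (hI3 : ∀ w ∈ I₃, ∃ A : Finset (Fin k), 3 ≤ A.card ∧
      G.neighborSet w = ⋃ i ∈ A, U i)
    (hI3' : ∀ A : Finset (Fin k), 3 ≤ A.card →
      ∃ w ∈ I₃, G.neighborSet w = ⋃ i ∈ A, U i)
    (S : Set V) (hScard : (k : ℕ∞) ≤ S.encard)
    (hSsh : ∀ T ⊆ S, ∃ w : V, G.neighborSet w ∩ S = T) :
    ∃ u : Fin k → V, S = Set.range u ∧ (∀ i, u i ∈ U i) ∧
      ∀ i j, i ≠ j → R (u i) (u j) :=
  stmt_15_general G k hk U X I₁ I₂ I₃ R hUdisj hX hRsymm hpart hXind hI1 hI2 hI3 S hScard hSsh
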